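/- Let C = {C_1,…,C_K} be a clustering of {1,…,n} and let A(t), t ≥ 0, be a sequence of n×n stochastic matrices satisfying: (B1) there exists e > 0 such that for all i, j, t, either A_{ij}(t) = 0 or A_{ij}(t) ≥ e; (B2) A_{ii}(t) ≥ e for all i and t; (B3) each A(t) has inter-cluster common influence w.r.t. C. Suppose there exists an integer L > 0 such that for every t ≥ 0 the matrix Σ_{s=t}^{t+L−1} A(s) has cluster-spanning-trees w.r.t. C. Let u : ℕ → ℝ be arbitrary, let α_1,…,α_K ∈ ℝ, and define the input I(t) ∈ ℝ^n by I_i(t) = α_p u(t) for i ∈ C_p. Then every solution of x(t+1) = A(t) x(t) + I(t) intra-cluster synchronizes: |x_i(t) − x_j(t)| → 0 as t → ∞ for all i, j lying in the same cluster. -/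
import Mathlib


open Finset Filter Topology Matrix

/-- An `n × n` real matrix is stochastic if all entries are nonnegative and
every row sums to `1`. -/
def IsStochastic {n : ℕ} (A : Matrix (Fin n) (Fin n) ℝ) : Prop :=
  (∀ i j, 0 ≤ A i j) ∧ ∀ i, ∑ j, A i j = 1

/-- A clustering of `{1,…,n}`: pairwise disjoint subsets whose union is everything. -/
def IsClustering {n K : ℕ} (C : Fin K → Finset (Fin n)) : Prop :=
  (∀ p q, p ≠ q → Disjoint (C p) (C q)) ∧ ∀ i, ∃ p, i ∈ C p

/-- Reachability along directed edges of `G(A)`: edge from `j` to `i` iff `A i j > 0`. -/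
def Reaches {n : ℕ} (A : Matrix (Fin n) (Fin n) ℝ) : Fin n → Fin n → Prop :=
  Relation.ReflTransGen fun j i => 0 < A i j

/-- `A` has cluster-spanning-trees w.r.t. `C`: for each cluster there is a vertex from
which every vertex of the cluster is reachable in `G(A)`. -/
def HasClusterSpanningTrees {n K : ℕ} (C : Fin K → Finset (Fin n))
    (A : Matrix (Fin n) (Fin n) ℝ) : Prop :=
  ∀ p, ∃ v, ∀ i ∈ C p, Reaches A v i

/-- Inter-cluster common influence: `∑_{j ∈ C q} A i j` is the same for all `i ∈ C p`. -/
def InterClusterCommonInfluence {n K : ℕ} (C : Fin K → Finset (Fin n))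
    (A : Matrix (Fin n) (Fin n) ℝ) : Prop :=
  ∀ p q, ∀ i ∈ C p, ∀ i' ∈ C p, ∑ j ∈ C q, A i j = ∑ j ∈ C q, A i' j

/-- Cluster ergodicity coefficient
`μ_C(A) = min_p min_{i,j ∈ C p} ∑_k min (A i k) (A j k)`. -/
noncomputable def muC {n K : ℕ} (C : Fin K → Finset (Fin n))
    (A : Matrix (Fin n) (Fin n) ℝ) : ℝ :=
  sInf {s | ∃ p, ∃ i ∈ C p, ∃ j ∈ C p, s = ∑ k, min (A i k) (A j k)}

/-- Cluster Hajnal diameter `Δ_C(A) = max_p max_{i,j ∈ C p} max_k |A i k - A j k|`. -/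
noncomputable def DeltaC {n K : ℕ} (C : Fin K → Finset (Fin n))
    (A : Matrix (Fin n) (Fin n) ℝ) : ℝ :=
  sSup {d | ∃ p, ∃ i ∈ C p, ∃ j ∈ C p, ∃ k, d = |A i k - A j k|}

/-- The cluster-consensus subspace `S_C`. -/
def SC {n K : ℕ} (C : Fin K → Finset (Fin n)) : Set (Fin n → ℝ) :=
  {x | ∀ p, ∀ i ∈ C p, ∀ j ∈ C p, x i = x j}

/-- Left product `prodFrom A a m = A (a+m-1) * ⋯ * A (a+1) * A a` (with `m` factors). -/
def prodFrom {n : ℕ} (A : ℕ → Matrix (Fin n) (Fin n) ℝ) (a : ℕ) :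
    ℕ → Matrix (Fin n) (Fin n) ℝ
  | 0 => 1
  | m + 1 => A (a + m) * prodFrom A a m

noncomputable def clDiam {n K : ℕ} (C : Fin K → Finset (Fin n)) (y : Fin n → ℝ) : ℝ :=
  ((insert (0:ℝ) ((Finset.univ : Finset (Fin K × Fin n × Fin n)).image
    (fun pr => if pr.2.1 ∈ C pr.1 ∧ pr.2.2 ∈ C pr.1 then y pr.2.1 - y pr.2.2 else 0))).max'
    (Finset.insert_nonempty _ _))

lemma clDiam_nonneg {n K : ℕ} (C : Fin K → Finset (Fin n)) (y : Fin n → ℝ) :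
    0 ≤ clDiam C y :=
  Finset.le_max' _ _ (Finset.mem_insert_self _ _)

lemma le_clDiam {n K : ℕ} {C : Fin K → Finset (Fin n)} {y : Fin n → ℝ} {p : Fin K}
    {i j : Fin n} (hi : i ∈ C p) (hj : j ∈ C p) : y i - y j ≤ clDiam C y := by
  apply Finset.le_max'
  refine Finset.mem_insert_of_mem (Finset.mem_image.2 ⟨(p, i, j), Finset.mem_univ _, ?_⟩)
  simp [hi, hj]

lemma clDiam_le {n K : ℕ} {C : Fin K → Finset (Fin n)} {y : Fin n → ℝ} {a : ℝ}
    (ha : 0 ≤ a) (h : ∀ p, ∀ i ∈ C p, ∀ j ∈ C p, y i - y j ≤ a) : clDiam C y ≤ a := by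
  apply Finset.max'_le
  intro b hb
  rcases Finset.mem_insert.1 hb with rfl | hb
  · exact ha
  · obtain ⟨⟨p, i, j⟩, -, rfl⟩ := Finset.mem_image.1 hb
    by_cases h' : i ∈ C p ∧ j ∈ C p
    · simpa [h'] using h p i h'.1 j h'.2
    · simpa [h'] using ha

lemma sum_partition {n K : ℕ} {C : Fin K → Finset (Fin n)} (hC : IsClustering C)
    (f : Fin n → ℝ) : ∑ k, f k = ∑ p, ∑ k ∈ C p, f k := by
  have hu : (Finset.univ : Finset (Fin n)) = Finset.univ.biUnion C := by
    ext i
    simpa using hC.2 i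
  rw [show (∑ k, f k) = ∑ k ∈ Finset.univ.biUnion C, f k by rw [← hu]]
  exact Finset.sum_biUnion fun p _ q _ hpq => hC.1 p q hpq

lemma hajnal {n K : ℕ} {C : Fin K → Finset (Fin n)} (hC : IsClustering C)
    {B : Matrix (Fin n) (Fin n) ℝ} (hB : IsStochastic B)
    (hinf : InterClusterCommonInfluence C B) {p : Fin K} {i j : Fin n}
    (hi : i ∈ C p) (hj : j ∈ C p) (y : Fin n → ℝ) :
    B.mulVec y i - B.mulVec y j ≤ (1 - ∑ k, min (B i k) (B j k)) * clDiam C y := by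
  set D := clDiam C y with hD
  set c : Fin n → ℝ := fun k => min (B i k) (B j k) with hc
  have hci : ∀ k, c k ≤ B i k := fun k => min_le_left _ _
  have hcj : ∀ k, c k ≤ B j k := fun k => min_le_right _ _
  have expand : B.mulVec y i - B.mulVec y j
      = ∑ k, (B i k - c k) * y k - ∑ k, (B j k - c k) * y k := by
    simp only [Matrix.mulVec, dotProduct]
    rw [← Finset.sum_sub_distrib, ← Finset.sum_sub_distrib]
    exact Finset.sum_congr rfl fun k _ => by ring
  have key : ∀ q, (∑ k ∈ C q, (B i k - c k) * y k) - (∑ k ∈ C q, (B j k - c k) * y k)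
      ≤ (∑ k ∈ C q, (B i k - c k)) * D := by
    intro q
    by_cases hq : (C q).Nonempty
    · obtain ⟨kM, hkM, hMax⟩ := (C q).exists_max_image y hq
      obtain ⟨km, hkm, hMin⟩ := (C q).exists_min_image y hq
      have h1 : ∑ k ∈ C q, (B i k - c k) * y k ≤ (∑ k ∈ C q, (B i k - c k)) * y kM := by
        rw [Finset.sum_mul]
        exact Finset.sum_le_sum fun k hk =>
          mul_le_mul_of_nonneg_left (hMax k hk) (sub_nonneg.2 (hci k))
      have h2 : (∑ k ∈ C q, (B j k - c k)) * y km ≤ ∑ k ∈ C q, (B j k - c k) * y k := by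
        rw [Finset.sum_mul]
        exact Finset.sum_le_sum fun k hk =>
          mul_le_mul_of_nonneg_left (hMin k hk) (sub_nonneg.2 (hcj k))
      have heq : ∑ k ∈ C q, (B j k - c k) = ∑ k ∈ C q, (B i k - c k) := by
        rw [Finset.sum_sub_distrib, Finset.sum_sub_distrib, hinf p q i hi j hj]
      have hS : 0 ≤ ∑ k ∈ C q, (B i k - c k) :=
        Finset.sum_nonneg fun k _ => sub_nonneg.2 (hci k)
      have hDq : y kM - y km ≤ D := le_clDiam hkM hkm
      calc (∑ k ∈ C q, (B i k - c k) * y k) - (∑ k ∈ C q, (B j k - c k) * y k)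
          ≤ (∑ k ∈ C q, (B i k - c k)) * y kM - (∑ k ∈ C q, (B j k - c k)) * y km := by
            exact sub_le_sub h1 h2
        _ = (∑ k ∈ C q, (B i k - c k)) * (y kM - y km) := by rw [heq]; ring
        _ ≤ (∑ k ∈ C q, (B i k - c k)) * D := mul_le_mul_of_nonneg_left hDq hS
    · simp [Finset.not_nonempty_iff_eq_empty.1 hq]
  calc B.mulVec y i - B.mulVec y j
      = ∑ q, ((∑ k ∈ C q, (B i k - c k) * y k) - ∑ k ∈ C q, (B j k - c k) * y k) := by
        rw [expand, sum_partition hC, sum_partition hC, ← Finset.sum_sub_distrib]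
    _ ≤ ∑ q, (∑ k ∈ C q, (B i k - c k)) * D := Finset.sum_le_sum fun q _ => key q
    _ = (∑ q, ∑ k ∈ C q, (B i k - c k)) * D := (Finset.sum_mul _ _ _).symm
    _ = (1 - ∑ k, c k) * D := by
        rw [← sum_partition hC, Finset.sum_sub_distrib, hB.2 i]

section prods
variable {n : ℕ} {A : ℕ → Matrix (Fin n) (Fin n) ℝ} {e : ℝ}

lemma isStochastic_one : IsStochastic (1 : Matrix (Fin n) (Fin n) ℝ) := by
  constructor
  · intro i j
    by_cases h : i = j <;> simp [Matrix.one_apply, h]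
  · intro i
    simp [Matrix.one_apply]

lemma isStochastic_mul {M N : Matrix (Fin n) (Fin n) ℝ} (hM : IsStochastic M)
    (hN : IsStochastic N) : IsStochastic (M * N) := by
  constructor
  · intro i j
    rw [Matrix.mul_apply]
    exact Finset.sum_nonneg fun l _ => mul_nonneg (hM.1 i l) (hN.1 l j)
  · intro i
    simp only [Matrix.mul_apply]
    rw [Finset.sum_comm]
    calc ∑ l, ∑ j, M i l * N l j = ∑ l, M i l * ∑ j, N l j := by
          simp [Finset.mul_sum]
      _ = 1 := by simp [hN.2, hM.2 i]

lemma prodFrom_stoch (h : ∀ t, IsStochastic (A t)) (a : ℕ) :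
    ∀ m, IsStochastic (prodFrom A a m)
  | 0 => isStochastic_one
  | m + 1 => isStochastic_mul (h (a + m)) (prodFrom_stoch h a m)

lemma prodFrom_nonneg (h : ∀ t, IsStochastic (A t)) (a m : ℕ) (i j : Fin n) :
    0 ≤ prodFrom A a m i j := (prodFrom_stoch h a m).1 i j

lemma mul_apply_le {M N : Matrix (Fin n) (Fin n) ℝ} (hM : ∀ i j, 0 ≤ M i j)
    (hN : ∀ i j, 0 ≤ N i j) (i k j : Fin n) : M i k * N k j ≤ (M * N) i j := by
  rw [Matrix.mul_apply]
  exact Finset.single_le_sum (f := fun l => M i l * N l j)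
    (fun l _ => mul_nonneg (hM i l) (hN l j)) (Finset.mem_univ k)

lemma prodFrom_add (a m1 : ℕ) : ∀ m2,
    prodFrom A a (m1 + m2) = prodFrom A (a + m1) m2 * prodFrom A a m1
  | 0 => by simp [prodFrom]
  | m2 + 1 => by
    rw [show prodFrom A a ((m1 + (m2 + 1))) = A (a + (m1 + m2)) * prodFrom A a (m1 + m2) from rfl,
      prodFrom_add a m1 m2,
      show prodFrom A (a + m1) (m2 + 1) = A ((a + m1) + m2) * prodFrom A (a + m1) m2 from rfl,
      mul_assoc]
    ring_nf

lemma prodFrom_diag (h : ∀ t, IsStochastic (A t)) (hB2 : ∀ t i, e ≤ A t i i)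
    (he : 0 ≤ e) (a : ℕ) (i : Fin n) : ∀ m, e ^ m ≤ prodFrom A a m i i
  | 0 => by simp [prodFrom, Matrix.one_apply]
  | m + 1 => by
    have h1 : e ^ (m + 1) ≤ A (a + m) i i * prodFrom A a m i i := by
      rw [pow_succ, mul_comm]
      exact mul_le_mul (hB2 (a + m) i) (prodFrom_diag h hB2 he a i m)
        (pow_nonneg he m) ((h (a + m)).1 i i)
    exact h1.trans (mul_apply_le (h (a + m)).1 (prodFrom_nonneg h a m) i i i)

lemma prodFrom_dichotomy (h : ∀ t, IsStochastic (A t))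
    (hB1 : ∀ t i j, A t i j = 0 ∨ e ≤ A t i j) (he : 0 ≤ e) (a : ℕ) (i j : Fin n) :
    ∀ m, prodFrom A a m i j = 0 ∨ e ^ m ≤ prodFrom A a m i j
  | 0 => by
    by_cases hij : i = j
    · right; simp [prodFrom, Matrix.one_apply, hij]
    · left; simp [prodFrom, Matrix.one_apply, hij]
  | m + 1 => by
    by_cases h0 : prodFrom A a (m + 1) i j = 0
    · exact Or.inl h0
    · right
      have hex : ∃ l, A (a + m) i l * prodFrom A a m l j ≠ 0 := by
        by_contra hall
        push_neg at hall
        apply h0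
        show (A (a + m) * prodFrom A a m) i j = 0
        rw [Matrix.mul_apply]
        exact Finset.sum_eq_zero fun l _ => hall l
      obtain ⟨l, hl⟩ := hex
      have hA : e ≤ A (a + m) i l := by
        rcases hB1 (a + m) i l with h' | h'
        · exact absurd (by rw [h', zero_mul]) hl
        · exact h'
      have hP : e ^ m ≤ prodFrom A a m l j := by
        rcases prodFrom_dichotomy h hB1 he a l j m with h' | h'
        · exact absurd (by rw [h', mul_zero]) hl
        · exact h'
      calc e ^ (m + 1) = e * e ^ m := by rw [pow_succ]; ring
        _ ≤ A (a + m) i l * prodFrom A a m l j :=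
            mul_le_mul hA hP (pow_nonneg he m) ((h (a + m)).1 i l)
        _ ≤ prodFrom A a (m + 1) i j :=
            mul_apply_le (h (a + m)).1 (prodFrom_nonneg h a m) i l j

lemma window_pos (h : ∀ t, IsStochastic (A t)) (hB2 : ∀ t i, e ≤ A t i i) (he : 0 ≤ e)
    {L s : ℕ} (hs : s < L) {a : ℕ} {b c : Fin n} (hbc : e ≤ A (a + s) b c) :
    e ^ L ≤ prodFrom A a L b c := by
  set r := L - s - 1 with hr
  have hL : L = (s + 1) + r := by omega
  have hsplit : prodFrom A a L =
      prodFrom A (a + (s + 1)) r * (A (a + s) * prodFrom A a s) := by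
    rw [hL, prodFrom_add]
    rfl
  have hmid : e * e ^ s ≤ (A (a + s) * prodFrom A a s) b c := by
    calc e * e ^ s ≤ A (a + s) b c * prodFrom A a s c c :=
          mul_le_mul hbc (prodFrom_diag h hB2 he a c s) (pow_nonneg he s) ((h (a + s)).1 b c)
      _ ≤ _ := mul_apply_le (h (a + s)).1 (prodFrom_nonneg h a s) b c c
  have hmidnn : ∀ i j, 0 ≤ (A (a + s) * prodFrom A a s) i j :=
    (isStochastic_mul (h (a + s)) (prodFrom_stoch h a s)).1
  calc e ^ L = e ^ r * (e * e ^ s) := by rw [hL]; ring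
    _ ≤ prodFrom A (a + (s + 1)) r b b * (A (a + s) * prodFrom A a s) b c :=
        mul_le_mul (prodFrom_diag h hB2 he _ b r) hmid
          (mul_nonneg he (pow_nonneg he s)) (prodFrom_nonneg h _ r b b)
    _ ≤ _ := by rw [hsplit]; exact mul_apply_le (prodFrom_nonneg h _ r) hmidnn b b c

end prods

lemma reach_back {n : ℕ} {M : Matrix (Fin n) (Fin n) ℝ} {v i : Fin n}
    (h : Reaches M v i) (S : Finset (Fin n)) (hi : i ∈ S) :
    v ∈ S ∨ ∃ a b, a ∉ S ∧ b ∈ S ∧ 0 < M b a := by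
  induction h using Relation.ReflTransGen.head_induction_on with
  | refl => exact Or.inl hi
  | @head a c hvc _ ih =>
    rcases ih with hc | hex
    · by_cases hv : a ∈ S
      · exact Or.inl hv
      · exact Or.inr ⟨a, c, hv, hc, hvc⟩
    · exact Or.inr hex

lemma ancestor {n K : ℕ} {C : Fin K → Finset (Fin n)} {A : ℕ → Matrix (Fin n) (Fin n) ℝ}
    {e : ℝ} (hstoch : ∀ t, IsStochastic (A t)) (he : 0 < e)
    (hB1 : ∀ t i j, A t i j = 0 ∨ e ≤ A t i j) (hB2 : ∀ t i, e ≤ A t i i)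
    {L : ℕ} (hL : 0 < L)
    (hspan : ∀ t, HasClusterSpanningTrees C (∑ s ∈ Finset.range L, A (t + s)))
    {p : Fin K} {i j : Fin n} (hi : i ∈ C p) (hj : j ∈ C p) (t : ℕ) :
    ∃ k, 0 < prodFrom A t (n * L) i k ∧ 0 < prodFrom A t (n * L) j k := by
  classical
  have he' : 0 ≤ e := he.le
  set B : ℕ → Fin n → Finset (Fin n) :=
    fun w v => Finset.univ.filter
      (fun k => 0 < prodFrom A (t + (n - w) * L) (w * L) v k) with hBdef
  have hmemB : ∀ w v k, k ∈ B w v ↔ 0 < prodFrom A (t + (n - w) * L) (w * L) v k := by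
    intro w v k; simp [hBdef]
  have hQsplit : ∀ w, w < n →
      prodFrom A (t + (n - (w+1)) * L) ((w+1) * L)
        = prodFrom A (t + (n - w) * L) (w * L) * prodFrom A (t + (n - (w+1)) * L) L := by
    intro w hw
    have h1 : (w + 1) * L = L + w * L := by ring
    have h2 : t + (n - (w+1)) * L + L = t + (n - w) * L := by
      have h3 : (n - (w+1)) + 1 = n - w := by omega
      calc t + (n - (w+1)) * L + L = t + ((n - (w+1)) + 1) * L := by ring
        _ = t + (n - w) * L := by rw [h3]
    rw [h1, prodFrom_add, h2]
  have hself : ∀ w v, v ∈ B w v := by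
    intro w v
    rw [hmemB]
    exact lt_of_lt_of_le (pow_pos he _) (prodFrom_diag hstoch hB2 he' _ v _)
  have hmono : ∀ w, w < n → ∀ v, B w v ⊆ B (w+1) v := by
    intro w hw v k hk
    rw [hmemB] at hk ⊢
    rw [hQsplit w hw]
    calc (0:ℝ) < prodFrom A (t + (n - w) * L) (w * L) v k
          * prodFrom A (t + (n - (w+1)) * L) L k k :=
        mul_pos hk (lt_of_lt_of_le (pow_pos he _) (prodFrom_diag hstoch hB2 he' _ k _))
      _ ≤ _ := mul_apply_le (prodFrom_nonneg hstoch _ _) (prodFrom_nonneg hstoch _ _) v k k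
  have hcross : ∀ w, w < n → ∀ v b c, b ∈ B w v →
      0 < (∑ s ∈ Finset.range L, A (t + (n - (w+1)) * L + s)) b c → c ∈ B (w+1) v := by
    intro w hw v b c hb hedge
    have hexs : ∃ s ∈ Finset.range L, 0 < A (t + (n - (w+1)) * L + s) b c := by
      by_contra hall
      push_neg at hall
      have hz : (∑ s ∈ Finset.range L, A (t + (n - (w+1)) * L + s)) b c = 0 := by
        have h4 : (∑ s ∈ Finset.range L, A (t + (n - (w+1)) * L + s)) b c
            = ∑ s ∈ Finset.range L, A (t + (n - (w+1)) * L + s) b c := by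
          simp [Matrix.sum_apply]
        rw [h4]
        exact Finset.sum_eq_zero fun s hs =>
          le_antisymm (hall s hs) ((hstoch _).1 b c)
      rw [hz] at hedge; exact lt_irrefl 0 hedge
    obtain ⟨s, hs, hApos⟩ := hexs
    have hAe : e ≤ A (t + (n - (w+1)) * L + s) b c := by
      rcases hB1 (t + (n - (w+1)) * L + s) b c with h' | h'
      · rw [h'] at hApos; exact absurd hApos (lt_irrefl 0)
      · exact h'
    have hW : e ^ L ≤ prodFrom A (t + (n - (w+1)) * L) L b c :=
      window_pos hstoch hB2 he' (Finset.mem_range.1 hs) hAe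
    rw [hmemB] at hb ⊢
    rw [hQsplit w hw]
    calc (0:ℝ) < prodFrom A (t + (n - w) * L) (w * L) v b
          * prodFrom A (t + (n - (w+1)) * L) L b c :=
        mul_pos hb (lt_of_lt_of_le (pow_pos he _) hW)
      _ ≤ _ := mul_apply_le (prodFrom_nonneg hstoch _ _) (prodFrom_nonneg hstoch _ _) v b c
  have hinv : ∀ w, w ≤ n → ((B w i ∩ B w j).Nonempty ∨ w + 2 ≤ (B w i ∪ B w j).card) := by
    intro w
    induction w with
    | zero =>
      intro _
      by_cases hij : i = j
      · exact Or.inl ⟨i, Finset.mem_inter.2 ⟨hself 0 i, by rw [hij]; exact hself 0 j⟩⟩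
      · right
        have hB0 : ∀ v : Fin n, B 0 v = {v} := by
          intro v
          ext k
          rw [hmemB, Finset.mem_singleton]
          simp only [Nat.zero_mul]
          show (0 < (1 : Matrix (Fin n) (Fin n) ℝ) v k) ↔ k = v
          constructor
          · intro hk
            by_contra hne
            rw [Matrix.one_apply_ne (fun hh => hne hh.symm)] at hk
            exact lt_irrefl 0 hk
          · rintro rfl
            rw [Matrix.one_apply_eq]
            exact one_pos
        rw [hB0, hB0, Finset.card_union_of_disjoint (Finset.disjoint_singleton.2 hij)]
        simp
    | succ w ih =>
      intro hw1
      have hw : w < n := by omega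
      rcases ih (by omega) with ⟨k, hk⟩ | hcard
      · rw [Finset.mem_inter] at hk
        exact Or.inl ⟨k, Finset.mem_inter.2 ⟨hmono w hw i hk.1, hmono w hw j hk.2⟩⟩
      · obtain ⟨v, hv⟩ := hspan (t + (n - (w+1)) * L) p
        have hri := reach_back (hv i hi) (B w i) (hself w i)
        have hrj := reach_back (hv j hj) (B w j) (hself w j)
        rcases hri with hvi | ⟨aa, bb, haa, hbb, hedge⟩
        · rcases hrj with hvj | ⟨aa, bb, haa, hbb, hedge⟩
          · exact Or.inl ⟨v, Finset.mem_inter.2 ⟨hmono w hw i hvi, hmono w hw j hvj⟩⟩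
          · have haj : aa ∈ B (w+1) j := hcross w hw j bb aa hbb hedge
            by_cases hmem : aa ∈ B w i
            · exact Or.inl ⟨aa, Finset.mem_inter.2 ⟨hmono w hw i hmem, haj⟩⟩
            · right
              have hsub : insert aa (B w i ∪ B w j) ⊆ B (w+1) i ∪ B (w+1) j := by
                intro z hz
                rcases Finset.mem_insert.1 hz with rfl | hz
                · exact Finset.mem_union_right _ haj
                · rcases Finset.mem_union.1 hz with h' | h'
                  · exact Finset.mem_union_left _ (hmono w hw i h')
                  · exact Finset.mem_union_right _ (hmono w hw j h')
              have hnotin : aa ∉ B w i ∪ B w j := by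
                rw [Finset.mem_union]; push_neg; exact ⟨hmem, haa⟩
              have hcard2 := Finset.card_le_card hsub
              rw [Finset.card_insert_of_notMem hnotin] at hcard2
              omega
        · have hai : aa ∈ B (w+1) i := hcross w hw i bb aa hbb hedge
          by_cases hmem : aa ∈ B w j
          · exact Or.inl ⟨aa, Finset.mem_inter.2 ⟨hai, hmono w hw j hmem⟩⟩
          · right
            have hsub : insert aa (B w i ∪ B w j) ⊆ B (w+1) i ∪ B (w+1) j := by
              intro z hz
              rcases Finset.mem_insert.1 hz with rfl | hz
              · exact Finset.mem_union_left _ hai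
              · rcases Finset.mem_union.1 hz with h' | h'
                · exact Finset.mem_union_left _ (hmono w hw i h')
                · exact Finset.mem_union_right _ (hmono w hw j h')
            have hnotin : aa ∉ B w i ∪ B w j := by
              rw [Finset.mem_union]; push_neg; exact ⟨haa, hmem⟩
            have hcard2 := Finset.card_le_card hsub
            rw [Finset.card_insert_of_notMem hnotin] at hcard2
            omega
  rcases hinv n le_rfl with ⟨k, hk⟩ | hcard
  · rw [Finset.mem_inter, hmemB, hmemB] at hk
    have hz : t + (n - n) * L = t := by simp
    rw [hz] at hk
    exact ⟨k, hk⟩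
  · exfalso
    have h5 := Finset.card_le_univ (B n i ∪ B n j)
    rw [Fintype.card_fin] at h5
    omega


lemma sum_cluster_eq {n K : ℕ} {C : Fin K → Finset (Fin n)} (hC : IsClustering C)
    {M : Matrix (Fin n) (Fin n) ℝ} (hM : InterClusterCommonInfluence C M)
    {g : Fin n → ℝ} (hg : ∀ q, ∀ a ∈ C q, ∀ b ∈ C q, g a = g b)
    {p : Fin K} {i i' : Fin n} (hi : i ∈ C p) (hi' : i' ∈ C p) :
    ∑ l, M i l * g l = ∑ l, M i' l * g l := by
  rw [sum_partition hC, sum_partition hC]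
  refine Finset.sum_congr rfl fun q _ => ?_
  by_cases hq : (C q).Nonempty
  · obtain ⟨l0, hl0⟩ := hq
    have h1 : ∀ z : Fin n, ∑ l ∈ C q, M z l * g l = (∑ l ∈ C q, M z l) * g l0 := by
      intro z
      rw [Finset.sum_mul]
      exact Finset.sum_congr rfl fun l hl => by rw [hg q l hl l0 hl0]
    rw [h1, h1, hM p q i hi i' hi']
  · simp [Finset.not_nonempty_iff_eq_empty.1 hq]

lemma infl_one {n K : ℕ} {C : Fin K → Finset (Fin n)} (hC : IsClustering C) :
    InterClusterCommonInfluence C (1 : Matrix (Fin n) (Fin n) ℝ) := by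
  intro p q i hi i' hi'
  have h1 : ∀ z : Fin n, (∑ k ∈ C q, (1 : Matrix (Fin n) (Fin n) ℝ) z k)
      = if z ∈ C q then 1 else 0 := by
    intro z
    simp [Matrix.one_apply]
  rw [h1, h1]
  have hiff : (i ∈ C q) ↔ (i' ∈ C q) := by
    constructor
    · intro h
      have hpq : p = q := by
        by_contra hne
        exact (Finset.disjoint_left.1 (hC.1 p q hne)) hi h
      rw [← hpq]; exact hi'
    · intro h
      have hpq : p = q := by
        by_contra hne
        exact (Finset.disjoint_left.1 (hC.1 p q hne)) hi' h
      rw [← hpq]; exact hi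
  by_cases hiq : i ∈ C q
  · rw [if_pos hiq, if_pos (hiff.1 hiq)]
  · rw [if_neg hiq, if_neg (fun h => hiq (hiff.2 h))]

lemma infl_mul {n K : ℕ} {C : Fin K → Finset (Fin n)} (hC : IsClustering C)
    {M N : Matrix (Fin n) (Fin n) ℝ} (hM : InterClusterCommonInfluence C M)
    (hN : InterClusterCommonInfluence C N) :
    InterClusterCommonInfluence C (M * N) := by
  intro p q i hi i' hi'
  have hmn : ∀ z : Fin n, ∑ k ∈ C q, (M * N) z k = ∑ l, M z l * (∑ k ∈ C q, N l k) := by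
    intro z
    simp only [Matrix.mul_apply]
    rw [Finset.sum_comm]
    exact Finset.sum_congr rfl fun l _ => by rw [Finset.mul_sum]
  rw [hmn, hmn]
  exact sum_cluster_eq hC hM (fun q' a ha b hb => hN q' q a ha b hb) hi hi'

lemma prodFrom_infl {n K : ℕ} {C : Fin K → Finset (Fin n)} (hC : IsClustering C)
    {A : ℕ → Matrix (Fin n) (Fin n) ℝ}
    (hB3 : ∀ t, InterClusterCommonInfluence C (A t)) (a : ℕ) :
    ∀ m, InterClusterCommonInfluence C (prodFrom A a m)
  | 0 => infl_one hC
  | m + 1 => infl_mul hC (hB3 (a + m)) (prodFrom_infl hC hB3 a m)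

lemma evolve {n K : ℕ} {C : Fin K → Finset (Fin n)} (hC : IsClustering C)
    {A : ℕ → Matrix (Fin n) (Fin n) ℝ}
    (hB3 : ∀ t, InterClusterCommonInfluence C (A t))
    {u : ℕ → ℝ} {α : Fin K → ℝ} {I : ℕ → Fin n → ℝ}
    (hI : ∀ t p, ∀ i ∈ C p, I t i = α p * u t)
    {x : ℕ → Fin n → ℝ} (hx : ∀ t, x (t + 1) = (A t).mulVec (x t) + I t)
    (t : ℕ) : ∀ m, ∃ w : Fin n → ℝ, (∀ q, ∀ a ∈ C q, ∀ b ∈ C q, w a = w b) ∧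
      x (t + m) = (prodFrom A t m).mulVec (x t) + w := by
  intro m
  induction m with
  | zero =>
    refine ⟨0, fun q a _ b _ => rfl, ?_⟩
    show x t = (1 : Matrix (Fin n) (Fin n) ℝ).mulVec (x t) + 0
    rw [Matrix.one_mulVec, add_zero]
  | succ m ih =>
    obtain ⟨w, hw, hxe⟩ := ih
    refine ⟨(A (t+m)).mulVec w + I (t+m), ?_, ?_⟩
    · intro q a ha b hb
      have h1 : (A (t+m)).mulVec w a = (A (t+m)).mulVec w b := by
        simp only [Matrix.mulVec, dotProduct]
        exact sum_cluster_eq hC (hB3 (t+m)) hw ha hb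
      simp only [Pi.add_apply]
      rw [h1, hI (t+m) q a ha, hI (t+m) q b hb]
    · have hstep : x (t + (m+1)) = (A (t+m)).mulVec (x (t+m)) + I (t+m) := hx (t+m)
      rw [hstep, hxe, Matrix.mulVec_add, Matrix.mulVec_mulVec,
        show prodFrom A t (m+1) = A (t+m) * prodFrom A t m from rfl, add_assoc]

theorem stmt11 {n K : ℕ} (C : Fin K → Finset (Fin n)) (hC : IsClustering C)
    (A : ℕ → Matrix (Fin n) (Fin n) ℝ)
    (hstoch : ∀ t, IsStochastic (A t))
    (e : ℝ) (he : 0 < e)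
    (hB1 : ∀ t i j, A t i j = 0 ∨ e ≤ A t i j)
    (hB2 : ∀ t i, e ≤ A t i i)
    (hB3 : ∀ t, InterClusterCommonInfluence C (A t))
    (L : ℕ) (hL : 0 < L)
    (hspan : ∀ t, HasClusterSpanningTrees C (∑ s ∈ Finset.range L, A (t + s)))
    (u : ℕ → ℝ) (α : Fin K → ℝ)
    (I : ℕ → Fin n → ℝ)
    (hI : ∀ t p, ∀ i ∈ C p, I t i = α p * u t)
    (x : ℕ → Fin n → ℝ)
    (hx : ∀ t, x (t + 1) = (A t).mulVec (x t) + I t) :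
    ∀ p, ∀ i ∈ C p, ∀ j ∈ C p,
      Tendsto (fun t => |x t i - x t j|) atTop (𝓝 0) := by
  intro p i hi j hj
  classical
  have hn : 0 < n := i.pos
  have he1 : e ≤ 1 := by
    have h1 : A 0 i i ≤ ∑ k, A 0 i k :=
      Finset.single_le_sum (fun k _ => (hstoch 0).1 i k) (Finset.mem_univ i)
    have h2 := (hstoch 0).2 i
    linarith [hB2 0 i]
  set T := n * L with hT
  have hT0 : 0 < T := Nat.mul_pos hn hL
  have heT : 0 < e ^ T := pow_pos he T
  have heT1 : e ^ T ≤ 1 := pow_le_one₀ he.le he1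
  set r : ℝ := 1 - e ^ T with hr
  have hr0 : 0 ≤ r := by rw [hr]; linarith
  have hr1 : r < 1 := by rw [hr]; linarith
  set D : ℕ → ℝ := fun t => clDiam C (x t) with hDdef
  have hDnn : ∀ t, 0 ≤ D t := fun t => clDiam_nonneg C (x t)
  have hstep : ∀ t, D (t + 1) ≤ D t := by
    intro t
    apply clDiam_le (hDnn t)
    intro q a ha b hb
    have hdiff : x (t+1) a - x (t+1) b = (A t).mulVec (x t) a - (A t).mulVec (x t) b := by
      rw [hx t]
      simp only [Pi.add_apply]
      rw [hI t q a ha, hI t q b hb]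
      ring
    rw [hdiff]
    have hh := hajnal hC (hstoch t) (hB3 t) ha hb (x t)
    have hmu : 0 ≤ ∑ k, min (A t a k) (A t b k) :=
      Finset.sum_nonneg fun k _ => le_min ((hstoch t).1 a k) ((hstoch t).1 b k)
    calc (A t).mulVec (x t) a - (A t).mulVec (x t) b
        ≤ (1 - ∑ k, min (A t a k) (A t b k)) * D t := hh
      _ ≤ 1 * D t := mul_le_mul_of_nonneg_right (by linarith) (hDnn t)
      _ = D t := one_mul _
  have hmono : ∀ s t, s ≤ t → D t ≤ D s := by
    intro s t hst
    induction t, hst using Nat.le_induction with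
    | base => exact le_rfl
    | succ t hst ih => exact (hstep t).trans ih
  have hcontr : ∀ t, D (t + T) ≤ r * D t := by
    intro t
    obtain ⟨w, hw, hxe⟩ := evolve hC hB3 hI hx t T
    apply clDiam_le (mul_nonneg hr0 (hDnn t))
    intro q a ha b hb
    have hPs : IsStochastic (prodFrom A t T) := prodFrom_stoch hstoch t T
    have hPinf : InterClusterCommonInfluence C (prodFrom A t T) := prodFrom_infl hC hB3 t T
    have hdiff : x (t+T) a - x (t+T) b
        = (prodFrom A t T).mulVec (x t) a - (prodFrom A t T).mulVec (x t) b := by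
      rw [hxe]
      simp only [Pi.add_apply]
      rw [hw q a ha b hb]
      ring
    rw [hdiff]
    have hh := hajnal hC hPs hPinf ha hb (x t)
    have hmu : e ^ T ≤ ∑ k, min (prodFrom A t T a k) (prodFrom A t T b k) := by
      obtain ⟨k0, hk1, hk2⟩ := ancestor hstoch he hB1 hB2 hL hspan ha hb t
      rw [← hT] at hk1 hk2
      have h1 : e ^ T ≤ prodFrom A t T a k0 := by
        rcases prodFrom_dichotomy hstoch hB1 he.le t a k0 T with h' | h'
        · rw [h'] at hk1; exact absurd hk1 (lt_irrefl 0)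
        · exact h'
      have h2 : e ^ T ≤ prodFrom A t T b k0 := by
        rcases prodFrom_dichotomy hstoch hB1 he.le t b k0 T with h' | h'
        · rw [h'] at hk2; exact absurd hk2 (lt_irrefl 0)
        · exact h'
      exact (le_min h1 h2).trans (Finset.single_le_sum
        (fun k _ => le_min (hPs.1 a k) (hPs.1 b k)) (Finset.mem_univ k0))
    calc (prodFrom A t T).mulVec (x t) a - (prodFrom A t T).mulVec (x t) b
        ≤ (1 - ∑ k, min (prodFrom A t T a k) (prodFrom A t T b k)) * D t := hh
      _ ≤ r * D t := mul_le_mul_of_nonneg_right (by rw [hr]; linarith) (hDnn t)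
  have hgeom : ∀ m, D (m * T) ≤ r ^ m * D 0 := by
    intro m
    induction m with
    | zero => simp
    | succ m ih =>
      have hmt : (m+1) * T = m * T + T := by ring
      rw [hmt]
      calc D (m*T + T) ≤ r * D (m*T) := hcontr (m*T)
        _ ≤ r * (r^m * D 0) := mul_le_mul_of_nonneg_left ih hr0
        _ = r^(m+1) * D 0 := by ring
  have hbound : ∀ t, D t ≤ r ^ (t / T) * D 0 := fun t =>
    (hmono _ _ (Nat.div_mul_le_self t T)).trans (hgeom (t / T))
  have hlim : Tendsto (fun m : ℕ => r ^ m * D 0) atTop (𝓝 0) := by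
    have h1 := (tendsto_pow_atTop_nhds_zero_of_lt_one hr0 hr1).mul_const (D 0)
    simpa using h1
  have hdiv : Tendsto (fun t : ℕ => t / T) atTop atTop := by
    apply Filter.tendsto_atTop_atTop.2
    intro b
    exact ⟨b * T, fun t ht => (Nat.le_div_iff_mul_le hT0).2 ht⟩
  have hD0 : Tendsto D atTop (𝓝 0) :=
    squeeze_zero hDnn hbound (hlim.comp hdiv)
  refine squeeze_zero (fun t => abs_nonneg _) (fun t => ?_) hD0
  exact abs_sub_le_iff.2 ⟨le_clDiam hi hj, le_clDiam hj hi⟩
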